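/- Consider Bernoulli bond percolation with parameter p on the Hamming graph H(d,n) with d ≥ 2, n ≥ 2. Let χ_line(p) denote the expected number of vertices joined to a fixed vertex v by open paths lying entirely within a single line through v (so χ_line(p) equals the susceptibility of the Erdős–Rényi graph G(n,p)). If (d−1)(χ_line(p) − 1) < 1, then the full susceptibility satisfies χ(p) ≤ χ_line(p) / (1 − (d−1)(χ_line(p) − 1)). -/

import Mathlib

open scoped Classical

noncomputable section

namespace Perc

variable {V : Type*} [Fintype V] [DecidableEq V]

/-- A percolation configuration: each (potential) edge is open (`true`) or closed (`false`). -/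
abbrev Config (V : Type*) := Sym2 V → Bool

/-- The probability weight of a configuration under Bernoulli(p) bond percolation on `G`:
non-edges of `G` are forced closed. -/
def weight (G : SimpleGraph V) (p : ℝ) (ω : Config V) : ℝ :=
  ∏ e : Sym2 V,
    if e ∈ G.edgeSet then (if ω e then p else 1 - p) else (if ω e then (0 : ℝ) else 1)

/-- Expectation under Bernoulli(p) bond percolation on `G`. -/
def expect (G : SimpleGraph V) (p : ℝ) (f : Config V → ℝ) : ℝ :=
  ∑ ω : Config V, weight G p ω * f ω

/-- Probability of an event under Bernoulli(p) bond percolation on `G`. -/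
def prob (G : SimpleGraph V) (p : ℝ) (A : Config V → Prop) : ℝ :=
  expect G p fun ω => if A ω then 1 else 0

/-- The subgraph of open edges of `G` in configuration `ω`. -/
def openGraph (G : SimpleGraph V) (ω : Config V) : SimpleGraph V where
  Adj x y := G.Adj x y ∧ ω (s(x, y)) = true
  symm := ⟨by
    intro x y h
    refine ⟨h.1.symm, ?_⟩
    rw [Sym2.eq_swap]
    exact h.2⟩
  loopless := ⟨fun x h => G.loopless.irrefl x h.1⟩

/-- The (vertex set of the) cluster of `x`: all vertices joined to `x` by open paths. -/
def cluster (G : SimpleGraph V) (ω : Config V) (x : V) : Finset V :=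
  Finset.univ.filter fun y => (openGraph G ω).Reachable x y

/-- The susceptibility: expected cluster size of `x`. -/
def chi (G : SimpleGraph V) (p : ℝ) (x : V) : ℝ :=
  expect G p fun ω => ((cluster G ω x).card : ℝ)

/-- The two-point function `τ_p(x-y) = ℙ_p(x ↔ y)`. -/
def tau (G : SimpleGraph V) (p : ℝ) (x y : V) : ℝ :=
  prob G p fun ω => (openGraph G ω).Reachable x y

end Perc

/-- The Hamming graph `H(d,n)`: vertices differ in exactly one coordinate. -/
def hamming (d n : ℕ) : SimpleGraph (Fin d → Fin n) where
  Adj x y := (Finset.univ.filter fun i => x i ≠ y i).card = 1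
  symm := ⟨by
    intro x y h
    have h2 : (Finset.univ.filter fun i => y i ≠ x i)
        = (Finset.univ.filter fun i => x i ≠ y i) := by
      apply Finset.filter_congr
      intro i _
      exact ne_comm
    rw [h2]
    exact h⟩
  loopless := ⟨by
    intro x h
    simp at h⟩

instance hammingAdjDecidable (d n : ℕ) : DecidableRel (hamming d n).Adj := fun _ _ =>
  inferInstanceAs (Decidable (_ = 1))

/-- The degree `m = d(n-1)` of `H(d,n)`, as a real number. -/
def mR (d n : ℕ) : ℝ := (d : ℝ) * ((n : ℝ) - 1)

/-- The number of vertices `V = n^d` of `H(d,n)`, as a real number. -/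
def VR (d n : ℕ) : ℝ := (n : ℝ) ^ d

/-- The cube root `V^{1/3}` of the number of vertices of `H(d,n)`. -/
def V13 (d n : ℕ) : ℝ := ((n : ℝ) ^ d) ^ ((1 : ℝ) / 3)

/-- A fixed base vertex of `H(d,n)`. -/
def v0 (d n : ℕ) (hn : 0 < n) : Fin d → Fin n := fun _ => ⟨0, hn⟩

/-- The `i`-directional line of `H(d,n)` through `v`, as a subgraph of `H(d,n)`:
both endpoints agree with `v` in every coordinate other than `i`. -/
def lineGraph (d n : ℕ) (i : Fin d) (v : Fin d → Fin n) : SimpleGraph (Fin d → Fin n) where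
  Adj x y := (hamming d n).Adj x y ∧ (∀ j, j ≠ i → x j = v j) ∧ (∀ j, j ≠ i → y j = v j)
  symm := ⟨fun x y h => ⟨(hamming d n).symm.symm _ _ h.1, h.2.2, h.2.1⟩⟩
  loopless := ⟨fun x h => (hamming d n).loopless.irrefl x h.1⟩

/-- The line susceptibility `χ_line(p)`: the expected number of vertices joined to `v` by
open paths lying entirely within the `i`-directional line through `v`. -/
def lineChi (d n : ℕ) (p : ℝ) (i : Fin d) (v : Fin d → Fin n) : ℝ :=
  Perc.expect (hamming d n) p fun ω =>
    ((Finset.univ.filter fun y =>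
        (Perc.openGraph (lineGraph d n i v) ω).Reachable v y).card : ℝ)

/-!
Explore the cluster of `v` line by line. Leaving an explored vertex `w` in direction `b`, the
exploration first finds the new part `R` of the `b`-line cluster of `w`, of expected size at most
`χ_line - 1`, because `H(d,n)` is transitive on pairs (vertex, line through it); each vertex of
`R` then starts a new exploration in each of the other `d - 1` directions, on edges independent
of those that determined `R`. By induction on the number of unexplored vertices, the expected
offspring of an exploration is therefore at most any `M ≥ 0` with
`(χ_line - 1)(1 + (d - 1) M) ≤ M`, e.g. `M = (χ_line - 1) / (1 - (d - 1)(χ_line - 1))`, and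
`χ ≤ 1 + d M` is the claimed bound.
-/

namespace SimpleGraph

variable {V : Type*}

def restrict (H : SimpleGraph V) (X : Set V) : SimpleGraph V where
  Adj x y := H.Adj x y ∧ x ∈ X ∧ y ∈ X
  symm := ⟨fun _ _ h => ⟨h.1.symm, h.2.2, h.2.1⟩⟩
  loopless := ⟨fun x h => H.loopless.irrefl x h.1⟩

theorem restrict_le (H : SimpleGraph V) (X : Set V) : H.restrict X ≤ H := fun _ _ h => h.1

theorem Reachable.mono_of_invariant {H₁ H₂ : SimpleGraph V} {S : Set V}
    (hS : ∀ a b, a ∈ S → H₁.Adj a b → b ∈ S ∧ H₂.Adj a b) {x y : V} (hx : x ∈ S)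
    (h : H₁.Reachable x y) : y ∈ S ∧ H₂.Reachable x y := by
  replace h := (reachable_iff_reflTransGen x y).mp h
  induction h with
  | refl => exact ⟨hx, .refl x⟩
  | tail _ hab ih =>
    obtain ⟨hb, hc⟩ := hS _ _ ih.1 hab
    exact ⟨hb, ih.2.trans hc.reachable⟩

theorem mem_of_restrict_reachable {H : SimpleGraph V} {X : Set V} {x y : V}
    (h : (H.restrict X).Reachable x y) (hy : y ∈ X) : x ∈ X :=
  (Reachable.mono_of_invariant (H₂ := H.restrict X)
    (fun _ _ _ (hab : (H.restrict X).Adj _ _) => ⟨hab.2.2, hab⟩) hy h.symm).1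

theorem Reachable.exists_last_exit {H : SimpleGraph V} {S : Set V} {x y : V}
    (h : H.Reachable x y) (hx : x ∈ S) (hy : y ∉ S) :
    ∃ u ∈ S, ∃ u' ∉ S, H.Adj u u' ∧ (H.restrict Sᶜ).Reachable u' y := by
  suffices key : (H.restrict Sᶜ).Reachable x y ∨
      ∃ u ∈ S, ∃ u' ∉ S, H.Adj u u' ∧ (H.restrict Sᶜ).Reachable u' y from
    key.resolve_left fun h' => mem_of_restrict_reachable h' hy hx
  clear hx
  replace h := (reachable_iff_reflTransGen x y).mp h
  induction h using Relation.ReflTransGen.head_induction_on with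
  | refl => exact .inl .rfl
  | head hac _ ih =>
    rcases ih with hc | exit
    · rename_i a c _
      have hcS : c ∉ S := mem_of_restrict_reachable hc hy
      by_cases haS : a ∈ S
      · exact .inr ⟨a, haS, c, hcS, hac, hc⟩
      · exact .inl ((Adj.reachable (G := H.restrict Sᶜ) ⟨hac, haS, hcS⟩).trans hc)
    · exact .inr exit

end SimpleGraph

theorem Sym2.bijective_map {α β : Type*} (σ : α ≃ β) : Function.Bijective (Sym2.map σ) :=
  ⟨Sym2.map.injective σ.injective, fun e => ⟨e.map σ.symm, by simp [Sym2.map_map]⟩⟩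

namespace Perc

open Finset

variable {V : Type*} [Fintype V] [DecidableEq V] {G : SimpleGraph V} {p : ℝ}

omit [DecidableEq V] in
theorem weight_nonneg (hp0 : 0 ≤ p) (hp1 : p ≤ 1) (ω : Config V) : 0 ≤ weight G p ω :=
  prod_nonneg fun _ _ => by split_ifs <;> linarith

theorem sum_weight : ∑ ω : Config V, weight G p ω = 1 :=
  calc ∑ ω : Config V, weight G p ω
      = ∏ e : Sym2 V, ∑ b : Bool,
          if e ∈ G.edgeSet then (if b then p else 1 - p) else (if b then (0 : ℝ) else 1) := by
        rw [Fintype.prod_sum]; rfl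
    _ = 1 := prod_eq_one fun e _ => by split_ifs <;> simp

theorem expect_const (c : ℝ) : expect G p (fun _ => c) = c := by
  rw [expect, ← sum_mul, sum_weight, one_mul]

theorem expect_add (f g : Config V → ℝ) :
    expect G p (fun ω => f ω + g ω) = expect G p f + expect G p g := by
  simp only [expect, mul_add, sum_add_distrib]

theorem expect_mul_const (f : Config V → ℝ) (c : ℝ) :
    expect G p (fun ω => f ω * c) = expect G p f * c := by
  simp only [expect, sum_mul, mul_assoc]

theorem expect_sum {ι : Type*} (s : Finset ι) (f : ι → Config V → ℝ) :
    expect G p (fun ω => ∑ i ∈ s, f i ω) = ∑ i ∈ s, expect G p (f i) := by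
  simp only [expect, mul_sum]
  exact sum_comm

theorem expect_mono (hp0 : 0 ≤ p) (hp1 : p ≤ 1) {f g : Config V → ℝ} (h : ∀ ω, f ω ≤ g ω) :
    expect G p f ≤ expect G p g :=
  sum_le_sum fun ω _ => mul_le_mul_of_nonneg_left (h ω) (weight_nonneg hp0 hp1 ω)

theorem prob_nonneg (hp0 : 0 ≤ p) (hp1 : p ≤ 1) (A : Config V → Prop) : 0 ≤ prob G p A :=
  sum_nonneg fun ω _ =>
    mul_nonneg (weight_nonneg hp0 hp1 ω) (by dsimp only; split_ifs <;> norm_num)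

omit [DecidableEq V] in
theorem weight_piecewise_mul (D : Set (Sym2 V)) (ω₁ ω₂ : Config V) :
    weight G p (D.piecewise ω₁ ω₂) * weight G p (D.piecewise ω₂ ω₁) =
      weight G p ω₁ * weight G p ω₂ := by
  simp only [weight, ← prod_mul_distrib]
  refine prod_congr rfl fun e _ => ?_
  by_cases he : e ∈ D
  · simp only [Set.piecewise_eq_of_mem _ _ _ he]
  · simp only [Set.piecewise_eq_of_notMem _ _ _ he, mul_comm]

/-- Exchanging the `D`-parts of two independent configurations preserves their joint weight. -/
theorem expect_mul_of_dependsOn (D : Set (Sym2 V)) {f g : Config V → ℝ}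
    (hf : ∀ ω₁ ω₂ : Config V, (∀ e ∈ D, ω₁ e = ω₂ e) → f ω₁ = f ω₂)
    (hg : ∀ ω₁ ω₂ : Config V, (∀ e ∉ D, ω₁ e = ω₂ e) → g ω₁ = g ω₂) :
    expect G p (fun ω => f ω * g ω) = expect G p f * expect G p g := by
  let exchange : Config V × Config V → Config V × Config V :=
    fun ω => (D.piecewise ω.1 ω.2, D.piecewise ω.2 ω.1)
  have hexchange : Function.Involutive exchange := fun ω => by
    ext e <;> by_cases he : e ∈ D <;> simp [exchange, he]
  calc expect G p (fun ω => f ω * g ω)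
      = ∑ ω : Config V × Config V, weight G p ω.1 * weight G p ω.2 * (f ω.1 * g ω.1) := by
        simp only [expect, Fintype.sum_prod_type, mul_assoc, ← mul_sum, ← sum_mul, sum_weight,
          one_mul]
    _ = ∑ ω : Config V × Config V, weight G p ω.1 * weight G p ω.2 * (f ω.1 * g ω.2) := by
        refine Fintype.sum_bijective exchange hexchange.bijective _ _ fun ω => ?_
        rw [weight_piecewise_mul]
        congr 2
        · exact hf _ _ fun e he => (Set.piecewise_eq_of_mem _ _ _ he).symm
        · exact hg _ _ fun e he => (Set.piecewise_eq_of_notMem _ _ _ he).symm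
    _ = expect G p f * expect G p g := by
        simp only [expect, sum_mul_sum, Fintype.sum_prod_type]
        exact sum_congr rfl fun _ _ => sum_congr rfl fun _ _ => by ring

theorem expect_le_of_dependsOn {α : Type*} [Fintype α] (D : α → Set (Sym2 V))
    {R : Config V → α} {F : α → Config V → ℝ} {g : α → ℝ} (hp0 : 0 ≤ p) (hp1 : p ≤ 1)
    (hR : ∀ a ω₁ ω₂, (∀ e ∈ D a, ω₁ e = ω₂ e) → R ω₁ = a → R ω₂ = a)
    (hF : ∀ a ω₁ ω₂, (∀ e ∉ D a, ω₁ e = ω₂ e) → F a ω₁ = F a ω₂)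
    (hg : ∀ ω, expect G p (F (R ω)) ≤ g (R ω)) :
    expect G p (fun ω => F (R ω) ω) ≤ expect G p (fun ω => g (R ω)) := by
  have hsplit : ∀ h : α → Config V → ℝ, expect G p (fun ω => h (R ω) ω) =
      ∑ a, expect G p (fun ω => (if R ω = a then 1 else 0) * h a ω) := by
    intro h
    rw [← expect_sum]
    simp only [ite_mul, one_mul, zero_mul, sum_ite_eq, mem_univ, if_true]
  have hindicator : ∀ a ω₁ ω₂, (∀ e ∈ D a, ω₁ e = ω₂ e) →
      (if R ω₁ = a then (1 : ℝ) else 0) = if R ω₂ = a then 1 else 0 := fun a ω₁ ω₂ h =>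
    if_congr ⟨hR a ω₁ ω₂ h, hR a ω₂ ω₁ fun e he => (h e he).symm⟩ rfl rfl
  rw [hsplit F, hsplit fun a _ => g a]
  refine sum_le_sum fun a _ => ?_
  rw [expect_mul_of_dependsOn (D a) (hindicator a) (hF a), expect_mul_const]
  by_cases ha : ∃ ω, R ω = a
  · obtain ⟨ω, rfl⟩ := ha
    exact mul_le_mul_of_nonneg_left (hg ω) (prob_nonneg hp0 hp1 _)
  · simp only [not_exists] at ha
    simp only [ha, if_false, expect_const, zero_mul, le_refl]

omit [DecidableEq V] in
theorem weight_comp_map (σ : G ≃g G) (ω : Config V) :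
    weight G p (fun e => ω (e.map σ)) = weight G p ω :=
  Fintype.prod_bijective _ (Sym2.bijective_map σ.toEquiv) _ _ fun _ =>
    if_congr σ.map_mem_edgeSet_iff.symm rfl rfl

theorem expect_comp_map (σ : G ≃g G) (f : Config V → ℝ) :
    expect G p (fun ω => f fun e => ω (e.map σ)) = expect G p f :=
  Fintype.sum_bijective _ (Sym2.bijective_map σ.toEquiv).comp_right _ _ fun ω => by
    rw [← weight_comp_map σ ω]; rfl

theorem mem_cluster {ω : Config V} {x y : V} :
    y ∈ cluster G ω x ↔ (openGraph G ω).Reachable x y := by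
  simp [cluster]

theorem self_mem_cluster (ω : Config V) (x : V) : x ∈ cluster G ω x :=
  mem_cluster.mpr .rfl

theorem mem_cluster_of_adj {ω : Config V} {x y z : V} (hy : y ∈ cluster G ω x)
    (h : (openGraph G ω).Adj y z) : z ∈ cluster G ω x :=
  mem_cluster.mpr ((mem_cluster.mp hy).trans h.reachable)

theorem cluster_mono {G' : SimpleGraph V} (h : G ≤ G') (ω : Config V) (x : V) :
    cluster G ω x ⊆ cluster G' ω x := fun _ hy =>
  mem_cluster.mpr ((mem_cluster.mp hy).mono
    fun _ _ (hab : (openGraph G ω).Adj _ _) => (⟨h hab.1, hab.2⟩ : (openGraph G' ω).Adj _ _))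

theorem cluster_subset {S : Set V} (hS : ∀ a b, a ∈ S → G.Adj a b → b ∈ S) {x : V}
    (hx : x ∈ S) (ω : Config V) : ↑(cluster G ω x) ⊆ S := fun _ hy =>
  (SimpleGraph.Reachable.mono_of_invariant (H₂ := openGraph G ω)
    (fun a b ha (hab : (openGraph G ω).Adj a b) => ⟨hS a b ha hab.1, hab⟩) hx
    (mem_cluster.mp hy)).1

theorem cluster_eq_of_agree {ω₁ ω₂ : Config V} {x : V} {S : Finset V}
    (h : cluster G ω₁ x = S) (hω : ∀ e ∈ ⋃ a ∈ S, G.incidenceSet a, ω₁ e = ω₂ e) :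
    cluster G ω₂ x = S := by
  subst h
  have hagree : ∀ a ∈ cluster G ω₁ x, ∀ b, G.Adj a b → ω₁ s(a, b) = ω₂ s(a, b) :=
    fun a ha b hab => hω _ (Set.mem_biUnion ha ⟨hab, Sym2.mem_mk_left a b⟩)
  refine Subset.antisymm (fun y hy => ?_) (fun y hy => ?_)
  · exact (SimpleGraph.Reachable.mono_of_invariant (S := ↑(cluster G ω₁ x))
      (H₂ := openGraph G ω₂) (fun a b ha (hab : (openGraph G ω₂).Adj a b) =>
        ⟨mem_cluster_of_adj ha ⟨hab.1, (hagree a ha b hab.1).trans hab.2⟩, hab⟩)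
      (self_mem_cluster ω₁ x) (mem_cluster.mp hy)).1
  · exact mem_cluster.mpr (SimpleGraph.Reachable.mono_of_invariant (S := ↑(cluster G ω₁ x))
      (H₂ := openGraph G ω₂) (fun a b ha (hab : (openGraph G ω₁).Adj a b) =>
        ⟨mem_cluster_of_adj ha hab, hab.1, (hagree a ha b hab.1).symm.trans hab.2⟩)
      (self_mem_cluster ω₁ x) (mem_cluster.mp hy)).2

theorem one_le_expect_card_cluster (hp0 : 0 ≤ p) (hp1 : p ≤ 1) (L : SimpleGraph V) (x : V) :
    1 ≤ expect G p (fun ω => ((cluster L ω x).card : ℝ)) :=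
  (expect_const (G := G) (p := p) 1).symm.le.trans <| expect_mono hp0 hp1 fun ω => by
    exact_mod_cast card_pos.mpr ⟨x, self_mem_cluster ω x⟩

omit [Fintype V] [DecidableEq V] in
theorem restrict_openGraph_congr {ω₁ ω₂ : Config V} {X : Set V}
    (h : ∀ x ∈ X, ∀ y ∈ X, ω₁ s(x, y) = ω₂ s(x, y)) :
    (openGraph G ω₁).restrict X = (openGraph G ω₂).restrict X := by
  ext x y
  exact ⟨fun ⟨⟨hxy, hω⟩, hx, hy⟩ => ⟨⟨hxy, h x hx y hy ▸ hω⟩, hx, hy⟩,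
    fun ⟨⟨hxy, hω⟩, hx, hy⟩ => ⟨⟨hxy, (h x hx y hy).symm ▸ hω⟩, hx, hy⟩⟩

omit [Fintype V] [DecidableEq V] in
theorem openGraph_comap (σ : V ≃ V) {L L' : SimpleGraph V} (hL : L'.comap σ = L)
    (ω : Config V) :
    (openGraph L' ω).comap σ = openGraph L fun e => ω (e.map σ) := by
  subst hL
  rfl

theorem card_cluster_comap (σ : V ≃ V) {L L' : SimpleGraph V} (hL : L'.comap σ = L)
    (ω : Config V) (x : V) :
    (cluster L (fun e => ω (e.map σ)) x).card = (cluster L' ω (σ x)).card := by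
  let φ : openGraph L (fun e => ω (e.map σ)) ≃g openGraph L' ω :=
    ⟨σ, by intro a b; rw [← openGraph_comap σ hL]; rfl⟩
  exact card_equiv σ fun y => by
    rw [mem_cluster, mem_cluster, ← φ.reachable_iff]; rfl

end Perc

open Perc Finset

section HammingGraph

variable {d n : ℕ}

theorem hamming_adj_iff {x y : Fin d → Fin n} :
    (hamming d n).Adj x y ↔ ∃ c, x c ≠ y c ∧ ∀ j ≠ c, x j = y j := by
  change #{i | x i ≠ y i} = 1 ↔ _
  simp only [card_eq_one, eq_singleton_iff_unique_mem, mem_filter, mem_univ, true_and]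
  exact exists_congr fun c => and_congr_right fun _ => forall_congr' fun j => not_imp_comm

theorem lineGraph_adj_iff {b : Fin d} {w x y : Fin d → Fin n} :
    (lineGraph d n b w).Adj x y ↔
      x b ≠ y b ∧ (∀ j ≠ b, x j = w j) ∧ ∀ j ≠ b, y j = w j := by
  change (hamming d n).Adj x y ∧ _ ↔ _
  rw [hamming_adj_iff]
  constructor
  · rintro ⟨⟨c, hc, -⟩, hx, hy⟩
    obtain rfl : c = b := by_contra fun hcb => hc ((hx c hcb).trans (hy c hcb).symm)
    exact ⟨hc, hx, hy⟩
  · rintro ⟨hb, hx, hy⟩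
    exact ⟨⟨b, hb, fun j hj => (hx j hj).trans (hy j hj).symm⟩, hx, hy⟩

theorem exists_lineGraph_adj {x y : Fin d → Fin n} (h : (hamming d n).Adj x y) :
    ∃ c, (lineGraph d n c x).Adj x y := by
  obtain ⟨c, hc, hxy⟩ := hamming_adj_iff.mp h
  exact ⟨c, lineGraph_adj_iff.mpr ⟨hc, fun _ _ => rfl, fun j hj => (hxy j hj).symm⟩⟩

theorem lineGraph_congr {b : Fin d} {u w : Fin d → Fin n} (h : ∀ j ≠ b, u j = w j) :
    lineGraph d n b u = lineGraph d n b w := by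
  have hline : ∀ z : Fin d → Fin n, (∀ j ≠ b, z j = u j) ↔ ∀ j ≠ b, z j = w j := fun _ =>
    forall₂_congr fun j hj => by rw [h j hj]
  ext x y
  rw [lineGraph_adj_iff, lineGraph_adj_iff, hline, hline]

theorem not_lineGraph_adj_of_ne {b c : Fin d} (hcb : c ≠ b) {u w x y : Fin d → Fin n}
    (h : (lineGraph d n c u).Adj x y) : ¬(lineGraph d n b w).Adj x y := fun h' =>
  (lineGraph_adj_iff.mp h).1 <|
    ((lineGraph_adj_iff.mp h').2.1 c hcb).trans ((lineGraph_adj_iff.mp h').2.2 c hcb).symm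

def lineTransport (i b : Fin d) (v w : Fin d → Fin n) : hamming d n ≃g hamming d n where
  toFun x j := Equiv.swap (v (Equiv.swap i b j)) (w j) (x (Equiv.swap i b j))
  invFun y j := Equiv.swap (v j) (w (Equiv.swap i b j)) (y (Equiv.swap i b j))
  left_inv x := funext fun j => by simp only [Equiv.swap_apply_self]
  right_inv y := funext fun j => by simp only [Equiv.swap_apply_self]
  map_rel_iff' {x y} :=
    Eq.congr_left ((hammingDist_comp (fun j => Equiv.swap (v (Equiv.swap i b j)) (w j))
      (x := fun j => x (Equiv.swap i b j)) (y := fun j => y (Equiv.swap i b j))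
      fun _ => (Equiv.swap _ _).injective).trans (card_equiv (Equiv.swap i b) fun _ => by simp))

theorem lineTransport_apply_self (i b : Fin d) (v w : Fin d → Fin n) :
    lineTransport i b v w v = w :=
  funext fun _ => Equiv.swap_apply_left _ _

theorem lineGraph_comap_lineTransport (i b : Fin d) (v w : Fin d → Fin n) :
    (lineGraph d n b w).comap (lineTransport i b v w) = lineGraph d n i v := by
  have hline : ∀ x : Fin d → Fin n,
      (∀ j ≠ b, lineTransport i b v w x j = w j) ↔ ∀ j ≠ i, x j = v j := fun x => by
    change (∀ j ≠ b, Equiv.swap _ _ _ = _) ↔ _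
    simp only [Equiv.swap_apply_eq_iff, Equiv.swap_apply_right]
    refine (Equiv.swap i b).forall_congr fun {_} => ?_
    simp [Equiv.swap_apply_eq_iff]
  ext x y
  change (hamming d n).Adj _ _ ∧ _ ↔ (hamming d n).Adj x y ∧ _
  rw [(lineTransport i b v w).map_adj_iff, hline, hline]

theorem expect_card_cluster_lineGraph (p : ℝ) (i b : Fin d) (v w : Fin d → Fin n) :
    expect (hamming d n) p (fun ω => ((cluster (lineGraph d n b w) ω w).card : ℝ)) =
      lineChi d n p i v := by
  let σ := lineTransport i b v w
  calc expect (hamming d n) p (fun ω => ((cluster (lineGraph d n b w) ω w).card : ℝ))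
      = expect (hamming d n) p fun ω =>
          ((cluster (lineGraph d n i v) (fun e => ω (e.map σ)) v).card : ℝ) := by
        congr 1
        funext ω
        have h := card_cluster_comap σ.toEquiv (lineGraph_comap_lineTransport i b v w) ω v
        rw [show σ.toEquiv v = w from lineTransport_apply_self i b v w] at h
        exact_mod_cast h.symm
    _ = lineChi d n p i v :=
        expect_comp_map σ fun ω => ((cluster (lineGraph d n i v) ω v).card : ℝ)

/-- The offspring of `w` in direction `b` in the exploration of a cluster whose explored
vertices are `B`. -/
def branch (B : Finset (Fin d → Fin n)) (w : Fin d → Fin n) (b : Fin d)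
    (ω : Config (Fin d → Fin n)) : Finset (Fin d → Fin n) :=
  {y | ∃ z ∉ B, (openGraph (lineGraph d n b w) ω).Adj w z ∧
    ((openGraph (hamming d n) ω).restrict (↑B)ᶜ).Reachable z y}

def lineClusterOutside (B : Finset (Fin d → Fin n)) (w : Fin d → Fin n) (b : Fin d)
    (ω : Config (Fin d → Fin n)) : Finset (Fin d → Fin n) :=
  cluster ((lineGraph d n b w).restrict (insert w (↑B)ᶜ)) ω w

section branch

variable {B : Finset (Fin d → Fin n)} {w : Fin d → Fin n} {b : Fin d}
  {ω : Config (Fin d → Fin n)}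

theorem lineClusterOutside_subset : ↑(lineClusterOutside B w b ω) ⊆ insert w (↑B : Set _)ᶜ :=
  cluster_subset (G := (lineGraph d n b w).restrict (insert w (↑B)ᶜ))
    (fun _ _ _ hab => hab.2.2) (Set.mem_insert w _) ω

theorem lineClusterOutside_subset_line {y : Fin d → Fin n}
    (hy : y ∈ lineClusterOutside B w b ω) : ∀ j ≠ b, y j = w j :=
  cluster_subset (G := (lineGraph d n b w).restrict (insert w (↑B)ᶜ))
    (S := {y | ∀ j ≠ b, y j = w j})
    (fun _ _ _ hab => (lineGraph_adj_iff.mp hab.1).2.2) (fun _ _ => rfl) ω hy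

theorem branch_subset (hw : w ∈ B) :
    branch B w b ω ⊆ (lineClusterOutside B w b ω).erase w ∪
      ((lineClusterOutside B w b ω).erase w).biUnion fun u =>
        (univ.erase b).biUnion fun c => branch (B ∪ lineClusterOutside B w b ω) u c ω := by
  set R := lineClusterOutside B w b ω
  intro y hy
  obtain ⟨z, hzB, hwz, hzy⟩ := (mem_filter.mp hy).2
  have hyB : y ∉ B := SimpleGraph.mem_of_restrict_reachable hzy.symm hzB
  have hzR : z ∈ R := mem_cluster_of_adj (self_mem_cluster ω w)
    ⟨⟨hwz.1, Set.mem_insert w _, Set.mem_insert_of_mem _ hzB⟩, hwz.2⟩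
  by_cases hyR : y ∈ R
  · exact mem_union_left _ (mem_erase.mpr ⟨fun h => hyB (h ▸ hw), hyR⟩)
  obtain ⟨u, huR, u', hu'R, ⟨⟨huu', hω⟩, huB, hu'B⟩, hu'y⟩ := hzy.exists_last_exit hzR hyR
  obtain ⟨c, hc⟩ := exists_lineGraph_adj huu'
  have hcb : c ≠ b := by
    rintro rfl
    rw [lineGraph_congr (lineClusterOutside_subset_line huR)] at hc
    exact hu'R (mem_cluster_of_adj huR ⟨⟨hc, Set.mem_insert_of_mem _ huB,
      Set.mem_insert_of_mem _ hu'B⟩, hω⟩)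
  refine mem_union_right _ (mem_biUnion.mpr ⟨u, mem_erase.mpr ⟨?_, huR⟩,
    mem_biUnion.mpr ⟨c, mem_erase.mpr ⟨hcb, mem_univ c⟩, mem_filter.mpr ⟨mem_univ y, ?_⟩⟩⟩)
  · exact fun h => huB (h ▸ hw)
  · refine ⟨u', notMem_union.mpr ⟨hu'B, hu'R⟩, ⟨hc, hω⟩, hu'y.mono ?_⟩
    rintro a a' ⟨⟨hadj, ha, ha'⟩, haR, ha'R⟩
    exact ⟨hadj, by simp_all, by simp_all⟩

theorem card_branch_le (hw : w ∈ B) :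
    (branch B w b ω).card ≤ ((lineClusterOutside B w b ω).erase w).card +
      ∑ u ∈ (lineClusterOutside B w b ω).erase w, ∑ c ∈ univ.erase b,
        (branch (B ∪ lineClusterOutside B w b ω) u c ω).card :=
  (card_le_card (branch_subset hw)).trans <| (card_union_le _ _).trans <|
    Nat.add_le_add_left (card_biUnion_le.trans (sum_le_sum fun _ _ => card_biUnion_le)) _

end branch

theorem branch_eq_of_agree {b c : Fin d} (hcb : c ≠ b) {w u : Fin d → Fin n}
    {L : SimpleGraph (Fin d → Fin n)} (hL : L ≤ lineGraph d n b w)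
    {S B : Finset (Fin d → Fin n)} (hSB : S ⊆ B) {ω₁ ω₂ : Config (Fin d → Fin n)}
    (h : ∀ e ∉ ⋃ a ∈ S, L.incidenceSet a, ω₁ e = ω₂ e) :
    branch B u c ω₁ = branch B u c ω₂ := by
  have hline : ∀ z, (lineGraph d n c u).Adj u z → ω₁ s(u, z) = ω₂ s(u, z) := fun z hz =>
    h _ fun he => by
      obtain ⟨a, -, hedge, -⟩ := Set.mem_iUnion₂.mp he
      exact not_lineGraph_adj_of_ne hcb hz (hL hedge)
  have houter : ∀ x ∈ (↑B : Set _)ᶜ, ∀ y ∈ (↑B : Set _)ᶜ, ω₁ s(x, y) = ω₂ s(x, y) :=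
    fun x hx y hy => h _ fun he => by
      obtain ⟨a, ha, -, hae⟩ := Set.mem_iUnion₂.mp he
      rcases Sym2.mem_iff.mp hae with rfl | rfl
      exacts [hx (hSB ha), hy (hSB ha)]
  unfold branch
  rw [restrict_openGraph_congr houter]
  refine filter_congr fun y _ => exists_congr fun z => and_congr_right fun _ =>
    and_congr_left fun _ => ?_
  exact and_congr_right fun hz => by rw [hline z hz]

theorem cluster_subset_insert_biUnion_branch (v : Fin d → Fin n) (ω : Config (Fin d → Fin n)) :
    cluster (hamming d n) ω v ⊆ insert v (univ.biUnion fun b => branch {v} v b ω) := by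
  intro y hy
  rcases eq_or_ne y v with rfl | hyv
  · exact mem_insert_self _ _
  obtain ⟨u, hu, u', hu', huu', hu'y⟩ := (mem_cluster.mp hy).exists_last_exit
    (S := ↑({v} : Finset _)) (by simp) (by simpa using hyv)
  obtain rfl : u = v := by simpa using hu
  obtain ⟨c, hc⟩ := exists_lineGraph_adj huu'.1
  exact mem_insert_of_mem (mem_biUnion.mpr
    ⟨c, mem_univ c, mem_filter.mpr ⟨mem_univ y, u', hu', ⟨hc, huu'.2⟩, hu'y⟩⟩)

theorem card_cluster_le (v : Fin d → Fin n) (ω : Config (Fin d → Fin n)) :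
    (cluster (hamming d n) ω v).card ≤ 1 + ∑ b, (branch {v} v b ω).card :=
  (card_le_card (cluster_subset_insert_biUnion_branch v ω)).trans <|
    (card_insert_le _ _).trans <| by rw [add_comm]; exact Nat.add_le_add_left card_biUnion_le 1

theorem expect_card_lineClusterOutside_erase_le {p χ : ℝ} (hp0 : 0 ≤ p) (hp1 : p ≤ 1)
    {b : Fin d} {w : Fin d → Fin n}
    (hχ : expect (hamming d n) p (fun ω => ((cluster (lineGraph d n b w) ω w).card : ℝ)) ≤ χ)
    (B : Finset (Fin d → Fin n)) :
    expect (hamming d n) p (fun ω => (((lineClusterOutside B w b ω).erase w).card : ℝ)) ≤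
      χ - 1 :=
  calc expect (hamming d n) p (fun ω => (((lineClusterOutside B w b ω).erase w).card : ℝ))
      ≤ expect (hamming d n) p (fun ω => ((cluster (lineGraph d n b w) ω w).card : ℝ) + -1) :=
        expect_mono hp0 hp1 fun ω => by
          have hsub :
              (lineClusterOutside B w b ω).card ≤ (cluster (lineGraph d n b w) ω w).card :=
            card_le_card (cluster_mono (SimpleGraph.restrict_le _ _) ω w)
          have hw : w ∈ lineClusterOutside B w b ω := self_mem_cluster ω w
          rw [card_erase_of_mem hw, Nat.cast_sub (card_pos.mpr ⟨w, hw⟩)]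
          push_cast
          linarith [(Nat.cast_le (α := ℝ)).mpr hsub]
    _ ≤ χ - 1 := by rw [Perc.expect_add, Perc.expect_const]; linarith

theorem expect_card_branch_le_step {p χ M : ℝ} (hp0 : 0 ≤ p) (hp1 : p ≤ 1)
    {B : Finset (Fin d → Fin n)} {w : Fin d → Fin n} {b : Fin d} (hw : w ∈ B)
    (hχ : expect (hamming d n) p (fun ω => ((cluster (lineGraph d n b w) ω w).card : ℝ)) ≤ χ)
    (hM : 0 ≤ M) (hoffspring : ∀ S u c, u ∈ S → u ∉ B →
      expect (hamming d n) p (fun ω => ((branch (B ∪ S) u c ω).card : ℝ)) ≤ M) :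
    expect (hamming d n) p (fun ω => ((branch B w b ω).card : ℝ)) ≤
      (χ - 1) * (1 + ((d : ℝ) - 1) * M) := by
  have hdirs : ((univ.erase b).card : ℝ) = d - 1 := by
    rw [card_erase_of_mem (mem_univ b), card_univ, Fintype.card_fin, Nat.cast_pred b.pos]
  let L := (lineGraph d n b w).restrict (insert w (↑B)ᶜ)
  let R := lineClusterOutside B w b
  let F : Finset (Fin d → Fin n) → Config (Fin d → Fin n) → ℝ := fun S ω =>
    ∑ u ∈ S.erase w, ∑ c ∈ univ.erase b, ((branch (B ∪ S) u c ω).card : ℝ)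
  have hR : ∀ S ω₁ ω₂, (∀ e ∈ ⋃ a ∈ S, L.incidenceSet a, ω₁ e = ω₂ e) → R ω₁ = S → R ω₂ = S :=
    fun _ _ _ h hS => cluster_eq_of_agree hS h
  have hF : ∀ S ω₁ ω₂, (∀ e ∉ ⋃ a ∈ S, L.incidenceSet a, ω₁ e = ω₂ e) → F S ω₁ = F S ω₂ :=
    fun _ _ _ h => sum_congr rfl fun _ _ => sum_congr rfl fun _ hc => by
      rw [branch_eq_of_agree (ne_of_mem_erase hc) (SimpleGraph.restrict_le _ _)
        subset_union_right h]
  have hFR : ∀ ω₀, expect (hamming d n) p (F (R ω₀)) ≤ ((R ω₀).erase w).card * ((d - 1) * M) := by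
    intro ω₀
    calc expect (hamming d n) p (F (R ω₀))
        = ∑ u ∈ (R ω₀).erase w, ∑ c ∈ univ.erase b,
            expect (hamming d n) p (fun ω => ((branch (B ∪ R ω₀) u c ω).card : ℝ)) := by
          simp only [F, Perc.expect_sum]
      _ ≤ ∑ u ∈ (R ω₀).erase w, ∑ c ∈ univ.erase b, M :=
          sum_le_sum fun u hu => sum_le_sum fun c _ => hoffspring _ u c (mem_of_mem_erase hu)
            ((Set.mem_insert_iff.mp (lineClusterOutside_subset
              (mem_coe.mpr (mem_of_mem_erase hu)))).resolve_left (ne_of_mem_erase hu))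
      _ = ((R ω₀).erase w).card * ((d - 1) * M) := by
          rw [sum_const, sum_const, nsmul_eq_mul, nsmul_eq_mul, hdirs]
  have hd : (1 : ℝ) ≤ d := by exact_mod_cast b.pos
  calc expect (hamming d n) p (fun ω => ((branch B w b ω).card : ℝ))
      ≤ expect (hamming d n) p (fun ω => (((R ω).erase w).card : ℝ) + F (R ω) ω) :=
        expect_mono hp0 hp1 fun ω => by simp only [R, F]; exact_mod_cast card_branch_le hw
    _ ≤ expect (hamming d n) p (fun ω => (((R ω).erase w).card : ℝ)) +
          expect (hamming d n) p (fun ω => ((R ω).erase w).card * ((d - 1) * M)) := by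
        rw [Perc.expect_add]
        gcongr
        -- given `R`, the offspring of its vertices are explored on edges not incident to `R`
        exact expect_le_of_dependsOn (g := fun S => ((S.erase w).card : ℝ) * ((d - 1) * M)) _
          hp0 hp1 hR hF hFR
    _ = expect (hamming d n) p (fun ω => (((R ω).erase w).card : ℝ)) * (1 + (d - 1) * M) := by
        rw [Perc.expect_mul_const]
        ring
    _ ≤ (χ - 1) * (1 + (d - 1) * M) :=
        mul_le_mul_of_nonneg_right (expect_card_lineClusterOutside_erase_le hp0 hp1 hχ B)
          (by nlinarith)

theorem expect_card_branch_le {p χ M : ℝ} (hp0 : 0 ≤ p) (hp1 : p ≤ 1)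
    (hχ : ∀ b w,
      expect (hamming d n) p (fun ω => ((cluster (lineGraph d n b w) ω w).card : ℝ)) ≤ χ)
    (hM : 0 ≤ M) (hfix : (χ - 1) * (1 + ((d : ℝ) - 1) * M) ≤ M)
    {B : Finset (Fin d → Fin n)} {w : Fin d → Fin n} (hw : w ∈ B) (b : Fin d) :
    expect (hamming d n) p (fun ω => ((branch B w b ω).card : ℝ)) ≤ M := by
  obtain ⟨k, hk⟩ : ∃ k, Bᶜ.card = k := ⟨_, rfl⟩
  induction k using Nat.strong_induction_on generalizing B w b with
  | _ k ih =>
  refine (expect_card_branch_le_step hp0 hp1 hw (hχ b w) hM fun S u c huS huB => ?_).trans hfix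
  refine ih _ ?_ (mem_union_right _ huS) c rfl
  exact hk ▸ card_lt_card (compl_lt_compl_iff_lt.mpr
    ((ssubset_iff_of_subset subset_union_left).mpr ⟨u, mem_union_right _ huS, huB⟩))

end HammingGraph

/-- Branching-process upper bound for the susceptibility of percolation on
`H(d,n)` in terms of the line susceptibility: if `(d-1)(χ_line(p) - 1) < 1` then
`χ(p) ≤ χ_line(p) / (1 - (d-1)(χ_line(p) - 1))`. -/
theorem hamming_susceptibility_line_bound :
    ∀ d n : ℕ, 2 ≤ d → 2 ≤ n → ∀ p : ℝ, 0 ≤ p → p ≤ 1 →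
    ∀ v : Fin d → Fin n, ∀ i : Fin d,
      ((d : ℝ) - 1) * (lineChi d n p i v - 1) < 1 →
      Perc.chi (hamming d n) p v
        ≤ lineChi d n p i v / (1 - ((d : ℝ) - 1) * (lineChi d n p i v - 1)) := by
  intro d n _ _ p hp0 hp1 v i hr
  set χ := lineChi d n p i v
  have hχ : ∀ b w, expect (hamming d n) p
      (fun ω => ((cluster (lineGraph d n b w) ω w).card : ℝ)) ≤ χ := fun b w =>
    (expect_card_cluster_lineGraph p i b v w).le
  have hχ1 : 1 ≤ χ := one_le_expect_card_cluster hp0 hp1 (lineGraph d n i v) v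
  have hden : 1 - ((d : ℝ) - 1) * (χ - 1) ≠ 0 := by linarith
  set M := (χ - 1) / (1 - ((d : ℝ) - 1) * (χ - 1))
  have hM : M * (1 - ((d : ℝ) - 1) * (χ - 1)) = χ - 1 := div_mul_cancel₀ _ hden
  have hfix : (χ - 1) * (1 + ((d : ℝ) - 1) * M) = M := by linear_combination -hM
  calc Perc.chi (hamming d n) p v
      ≤ expect (hamming d n) p (fun ω => 1 + ∑ b, ((branch {v} v b ω).card : ℝ)) :=
        expect_mono hp0 hp1 fun ω => by exact_mod_cast card_cluster_le v ω
    _ ≤ 1 + ∑ _b : Fin d, M := by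
        rw [Perc.expect_add, Perc.expect_const, Perc.expect_sum]
        gcongr with b
        exact expect_card_branch_le hp0 hp1 hχ (div_nonneg (by linarith) (by linarith)) hfix.le
          (mem_singleton_self v) b
    _ = χ / (1 - ((d : ℝ) - 1) * (χ - 1)) := by
        rw [sum_const, card_univ, Fintype.card_fin, nsmul_eq_mul, eq_div_iff hden]
        linear_combination (d : ℝ) * hM
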